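/- If 𝒜 = (R_1,…,R_i) and ℬ = (T_1,…,T_j) are geodesics of alike linear orders on L(A) such that R_i = T_1 and the switching pairs occurring in 𝒜 and in ℬ are pairwise distinct (no unordered pair of alternatives is a switching pair of both), then the concatenation 𝒞 = (R_1,…,R_i, T_2,…,T_j) is a geodesic connecting R_1 and T_j. -/

import Mathlib

/-!
Common definitions for formalizing Condorcet domains.

A linear order on a finite set `A : Finset α` of alternatives is encoded as a
duplicate-free list enumerating the elements of `A` from most preferred (head)
to least preferred (last).
-/

variable {α : Type*}

/-- `l` is a linear order on the finite set `A` of alternatives. -/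
def IsLinOrd [DecidableEq α] (A : Finset α) (l : List α) : Prop :=
  l.Nodup ∧ l.toFinset = A

/-- The restriction of a linear order `l` to the subset `S` of alternatives. -/
def restrictOrd [DecidableEq α] (l : List α) (S : Finset α) : List α :=
  l.filter (fun x => decide (x ∈ S))

/-- The restriction of a domain `D` to the subset `S` of alternatives. -/
def restrictDom [DecidableEq α] (D : Set (List α)) (S : Finset α) : Set (List α) :=
  (fun l => restrictOrd l S) '' D

/-- The never-condition `x N (k+1)`: no linear order in `E` ranks `x` in
position `k+1` (positions are counted from `1`, so `k : Fin 3` is the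
zero-based index).  `k = 0` is a never-top condition, `k = 2` a never-bottom
condition. -/
def NeverCond (E : Set (List α)) (x : α) (k : Fin 3) : Prop :=
  ∀ l ∈ E, l[(k : ℕ)]? ≠ some x

/-- The set of never-conditions (encoded as pairs `(x, k)`) satisfied by a
domain `E` on the triple `T`. -/
def NeverConds (T : Finset α) (E : Set (List α)) : Set (α × Fin 3) :=
  {p | p.1 ∈ T ∧ NeverCond E p.1 p.2}

/-- The set of peak-pit conditions (never-top or never-bottom conditions)
satisfied by a domain `E` on the triple `T`. -/
def PeakPitConds (T : Finset α) (E : Set (List α)) : Set (α × Fin 3) :=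
  {p | p.1 ∈ T ∧ (p.2 = 0 ∨ p.2 = 2) ∧ NeverCond E p.1 p.2}

/-- `D` is a Condorcet domain on `A`: a set of linear orders on `A` whose
restriction to every triple of distinct alternatives satisfies some
never-condition. -/
def IsCondorcetDomain [DecidableEq α] (A : Finset α) (D : Set (List α)) : Prop :=
  (∀ l ∈ D, IsLinOrd A l) ∧
    ∀ a b c : α, a ∈ A → b ∈ A → c ∈ A → a ≠ b → a ≠ c → b ≠ c →
      ∃ x ∈ ({a, b, c} : Finset α), ∃ k : Fin 3,
        NeverCond (restrictDom D {a, b, c}) x k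

/-- `D` is a peak-pit Condorcet domain on `A`: a set of linear orders on `A`
whose restriction to every triple of distinct alternatives satisfies a
never-top or a never-bottom condition. -/
def IsPeakPitDomain [DecidableEq α] (A : Finset α) (D : Set (List α)) : Prop :=
  (∀ l ∈ D, IsLinOrd A l) ∧
    ∀ a b c : α, a ∈ A → b ∈ A → c ∈ A → a ≠ b → a ≠ c → b ≠ c →
      ∃ x ∈ ({a, b, c} : Finset α),
        NeverCond (restrictDom D {a, b, c}) x 0 ∨
          NeverCond (restrictDom D {a, b, c}) x 2

/-- Two linear orders are alike if they differ by a swap of two adjacent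
alternatives. -/
def Alike (R T : List α) : Prop :=
  ∃ (l₁ l₂ : List α) (x y : α), x ≠ y ∧
    R = l₁ ++ x :: y :: l₂ ∧ T = l₁ ++ y :: x :: l₂

/-- `P` is a path of alike linear orders on `L(A)`. -/
def IsPathOn [DecidableEq α] (A : Finset α) (P : List (List α)) : Prop :=
  P ≠ [] ∧ (∀ l ∈ P, IsLinOrd A l) ∧ P.Chain' Alike

/-- `P` is a path of alike linear orders on `L(A)` connecting `R` and `T`. -/
def IsPath [DecidableEq α] (A : Finset α) (P : List (List α)) (R T : List α) : Prop :=
  IsPathOn A P ∧ P.head? = some R ∧ P.getLast? = some T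

/-- `P` is a geodesic on `L(A)` connecting `R` and `T`: a path of alike linear
orders of minimal length among all such paths. -/
def IsGeodesic [DecidableEq α] (A : Finset α) (P : List (List α)) (R T : List α) : Prop :=
  IsPath A P R T ∧ ∀ Q : List (List α), IsPath A Q R T → P.length ≤ Q.length

/-- The switching pair of alternatives between two alike linear orders (as an
unordered pair); `none` if the two lists do not differ. -/
def switchPair? [DecidableEq α] (R T : List α) : Option (Sym2 α) :=
  ((R.zip T).find? (fun p => decide (p.1 ≠ p.2))).map (Function.uncurry Sym2.mk)

/-- `S(P)`: the sequence of switching pairs of a path of alike linear orders. -/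
def switchSeq [DecidableEq α] (P : List (List α)) : List (Sym2 α) :=
  (P.zip P.tail).filterMap (fun p => switchPair? p.1 p.2)

/-- The restriction of a path to the subset `B`: restrict every member and
remove consecutive duplicates. -/
def restrictPath [DecidableEq α] (P : List (List α)) (B : Finset α) : List (List α) :=
  (P.map (fun l => restrictOrd l B)).destutter (· ≠ ·)

/-- `D` is connected: any two of its members are joined by a path of alike
linear orders lying entirely in `D`. -/
def ConnectedDomain [DecidableEq α] (A : Finset α) (D : Set (List α)) : Prop :=
  ∀ R ∈ D, ∀ T ∈ D, ∃ P : List (List α), IsPath A P R T ∧ ∀ l ∈ P, l ∈ D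

/-- `D` is directly connected: any two of its members are joined by a geodesic
lying entirely in `D`. -/
def DirectlyConnectedDomain [DecidableEq α] (A : Finset α) (D : Set (List α)) : Prop :=
  ∀ R ∈ D, ∀ T ∈ D, ∃ P : List (List α), IsGeodesic A P R T ∧ ∀ l ∈ P, l ∈ D

/-- Two unordered pairs of alternatives are disjoint. -/
def DisjointPair (p q : Sym2 α) : Prop := ∀ x : α, x ∈ p → x ∉ q

/-- One swap of an adjacent disjoint pair of switching pairs in a sequence of
switching pairs. -/
inductive AdjSwap : List (Sym2 α) → List (Sym2 α) → Prop
  | swap (l₁ l₂ : List (Sym2 α)) (p q : Sym2 α) (h : DisjointPair p q) :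
      AdjSwap (l₁ ++ p :: q :: l₂) (l₁ ++ q :: p :: l₂)

/-- Two paths are equivalent if their sequences of switching pairs differ by a
finite number of swaps of adjacent disjoint pairs of switching pairs. -/
def PathEquiv [DecidableEq α] (P Q : List (List α)) : Prop :=
  Relation.ReflTransGen AdjSwap (switchSeq P) (switchSeq Q)

/-- Two domains are isomorphic if some bijection between the underlying sets of
alternatives maps one domain onto the other (acting position-wise on linear
orders). -/
def DomIsomorphic (A B : Finset α) (D E : Set (List α)) : Prop :=
  ∃ f : α → α, Set.BijOn f ↑A ↑B ∧ E = (fun l => l.map f) '' D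

/-!
Each step of a path of alike linear orders reverses exactly one pair of alternatives, so a path
from `R` to `T` has at least `d(R, T) + 1` members, where `d` is the Kendall distance (the number
of pairs ranked oppositely by `R` and `T`); bubble sort attains this bound, so geodesics are exactly
the paths with `d(R, T) + 1` members. Every pair ranked oppositely by the endpoints of a path is
one of its switching pairs. A pair reversed between `R` and `S` but not between `R` and `T` is
therefore reversed between `S` and `T` too, and switches in both geodesics. With disjoint switching
pairs this cannot happen (nor with the roles of the two geodesics exchanged), so
`d(R, S) + d(S, T) ≤ d(R, T)` and the concatenation has no more members than a geodesic.
-/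

section KendallDistance

variable [DecidableEq α] {A : Finset α}

theorem List.idxOf_append_cons_cons_left {l₁ l₂ : List α} {x y : α} (hx : x ∉ l₁) :
    (l₁ ++ x :: y :: l₂).idxOf x = l₁.length := by
  simp [List.idxOf_append_of_notMem hx]

theorem List.idxOf_append_cons_cons_right {l₁ l₂ : List α} {x y : α} (hy : y ∉ l₁)
    (hxy : x ≠ y) : (l₁ ++ x :: y :: l₂).idxOf y = l₁.length + 1 := by
  simp [List.idxOf_append_of_notMem hy, List.idxOf_cons_ne _ hxy]

theorem List.idxOf_append_swap_of_ne {l₁ l₂ : List α} {x y w : α} (hx : w ≠ x) (hy : w ≠ y) :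
    (l₁ ++ y :: x :: l₂).idxOf w = (l₁ ++ x :: y :: l₂).idxOf w := by
  simp [List.idxOf_append, List.idxOf_cons_ne _ hx.symm, List.idxOf_cons_ne _ hy.symm]

theorem List.Nodup.idxOf_lt_idxOf_append_cons_cons {l₁ l₂ : List α} {x y : α}
    (hnd : (l₁ ++ x :: y :: l₂).Nodup) :
    (l₁ ++ x :: y :: l₂).idxOf x < (l₁ ++ x :: y :: l₂).idxOf y := by
  have hxy : x ≠ y := by rintro rfl; simp [List.nodup_append] at hnd
  rw [List.idxOf_append_cons_cons_left fun h => List.disjoint_of_nodup_append hnd h (by simp),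
    List.idxOf_append_cons_cons_right (fun h => List.disjoint_of_nodup_append hnd h (by simp)) hxy]
  omega

theorem List.Nodup.pairwise_idxOf_lt {l : List α} (h : l.Nodup) :
    l.Pairwise (fun a b => l.idxOf a < l.idxOf b) :=
  List.pairwise_iff_getElem.2 fun i j _ _ hij => by rwa [h.idxOf_getElem, h.idxOf_getElem]

theorem List.idxOf_lt_idxOf_swap_iff {l₁ l₂ : List α} {x y u v : α}
    (hnd : (l₁ ++ x :: y :: l₂).Nodup) (hu : u ∈ l₁ ++ x :: y :: l₂)
    (hv : v ∈ l₁ ++ x :: y :: l₂) (huv : s(u, v) ≠ s(x, y)) :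
    (l₁ ++ y :: x :: l₂).idxOf u < (l₁ ++ y :: x :: l₂).idxOf v ↔
      (l₁ ++ x :: y :: l₂).idxOf u < (l₁ ++ x :: y :: l₂).idxOf v := by
  have hxy : x ≠ y := by rintro rfl; simp [List.nodup_append] at hnd
  have hx : x ∉ l₁ := fun h => List.disjoint_of_nodup_append hnd h (by simp)
  have hy : y ∉ l₁ := fun h => List.disjoint_of_nodup_append hnd h (by simp)
  have hx₁ := List.idxOf_append_cons_cons_left (y := y) (l₂ := l₂) hx
  have hy₁ := List.idxOf_append_cons_cons_right (l₂ := l₂) hy hxy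
  have hy₂ := List.idxOf_append_cons_cons_left (y := x) (l₂ := l₂) hy
  have hx₂ := List.idxOf_append_cons_cons_right (l₂ := l₂) hx hxy.symm
  have hcases : ∀ w ∈ l₁ ++ x :: y :: l₂, w = x ∨ w = y ∨
      ((l₁ ++ y :: x :: l₂).idxOf w = (l₁ ++ x :: y :: l₂).idxOf w ∧
        (l₁ ++ x :: y :: l₂).idxOf w ≠ l₁.length ∧
        (l₁ ++ x :: y :: l₂).idxOf w ≠ l₁.length + 1) := by
    intro w hw
    by_cases hwx : w = x
    · exact .inl hwx
    by_cases hwy : w = y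
    · exact .inr (.inl hwy)
    exact .inr (.inr ⟨List.idxOf_append_swap_of_ne hwx hwy,
      by rwa [← hx₁, Ne, List.idxOf_inj hw], by rwa [← hy₁, Ne, List.idxOf_inj hw]⟩)
  rcases hcases u hu with rfl | rfl | ⟨hu₁, hu₂, hu₃⟩ <;>
    rcases hcases v hv with rfl | rfl | ⟨hv₁, hv₂, hv₃⟩ <;>
    first | omega | simp at huv

theorem IsLinOrd.mem_iff {l : List α} (h : IsLinOrd A l) {a : α} : a ∈ l ↔ a ∈ A := by
  rw [← List.mem_toFinset, h.2]

theorem IsLinOrd.idxOf_ne {l : List α} (h : IsLinOrd A l) {a b : α} (ha : a ∈ A) (hab : a ≠ b) :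
    l.idxOf a ≠ l.idxOf b :=
  mt (List.idxOf_inj (h.mem_iff.2 ha)).1 hab

theorem IsLinOrd.of_alike {R T : List α} (hR : IsLinOrd A R) (h : Alike R T) : IsLinOrd A T := by
  obtain ⟨l₁, l₂, x, y, -, rfl, rfl⟩ := h
  have hp : (l₁ ++ x :: y :: l₂).Perm (l₁ ++ y :: x :: l₂) := (List.Perm.swap y x l₂).append_left l₁
  exact ⟨hp.nodup_iff.1 hR.1, by rw [← hR.2, List.toFinset_eq_of_perm _ _ hp.symm]⟩

def discordantPairs (A : Finset α) (R T : List α) : Finset (α × α) :=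
  (A ×ˢ A).filter fun p => R.idxOf p.1 < R.idxOf p.2 ∧ T.idxOf p.2 < T.idxOf p.1

def kendallDist (A : Finset α) (R T : List α) : ℕ := (discordantPairs A R T).card

theorem mem_discordantPairs {R T : List α} {u v : α} :
    (u, v) ∈ discordantPairs A R T ↔
      (u ∈ A ∧ v ∈ A) ∧ R.idxOf u < R.idxOf v ∧ T.idxOf v < T.idxOf u := by
  simp [discordantPairs]

theorem mem_discordantPairs_comm {R T : List α} {u v : α} :
    (u, v) ∈ discordantPairs A R T ↔ (v, u) ∈ discordantPairs A T R := by
  simp only [mem_discordantPairs]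
  tauto

theorem kendallDist_self (R : List α) : kendallDist A R R = 0 := by
  simp only [kendallDist, Finset.card_eq_zero, Finset.eq_empty_iff_forall_notMem]
  rintro ⟨u, v⟩ h
  rw [mem_discordantPairs] at h
  omega

theorem mem_discordantPairs_or {R S T : List α} (hS : IsLinOrd A S) {u v : α}
    (h : (u, v) ∈ discordantPairs A R T) :
    (u, v) ∈ discordantPairs A R S ∨ (u, v) ∈ discordantPairs A S T := by
  simp only [mem_discordantPairs] at h ⊢
  have huv : u ≠ v := by rintro rfl; omega
  rcases (hS.idxOf_ne h.1.1 huv).lt_or_gt with hlt | hgt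
  · exact .inr ⟨h.1, hlt, h.2.2⟩
  · exact .inl ⟨h.1, h.2.1, hgt⟩

theorem disjoint_discordantPairs (R S T : List α) :
    Disjoint (discordantPairs A R S) (discordantPairs A S T) := by
  rw [Finset.disjoint_left]
  rintro ⟨u, v⟩ h₁ h₂
  rw [mem_discordantPairs] at h₁ h₂
  omega

theorem kendallDist_swap {l₁ l₂ : List α} {x y : α} {T : List α}
    (hL : IsLinOrd A (l₁ ++ x :: y :: l₂)) (hT : T.idxOf y < T.idxOf x) :
    kendallDist A (l₁ ++ x :: y :: l₂) T = kendallDist A (l₁ ++ y :: x :: l₂) T + 1 := by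
  have hxy : x ≠ y := by rintro rfl; omega
  have hswap : Alike (l₁ ++ x :: y :: l₂) (l₁ ++ y :: x :: l₂) := ⟨l₁, l₂, x, y, hxy, rfl, rfl⟩
  have hxy₁ := List.Nodup.idxOf_lt_idxOf_append_cons_cons hL.1
  have hyx₂ := List.Nodup.idxOf_lt_idxOf_append_cons_cons (hL.of_alike hswap).1
  have hnotMem : (x, y) ∉ discordantPairs A (l₁ ++ y :: x :: l₂) T := by
    rw [mem_discordantPairs]
    omega
  suffices discordantPairs A (l₁ ++ x :: y :: l₂) T =
      insert (x, y) (discordantPairs A (l₁ ++ y :: x :: l₂) T) by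
    rw [kendallDist, kendallDist, this, Finset.card_insert_of_notMem hnotMem]
  ext ⟨u, v⟩
  rw [Finset.mem_insert, mem_discordantPairs, mem_discordantPairs, Prod.mk.injEq]
  by_cases hpair : s(u, v) = s(x, y)
  · have hxA : x ∈ A := hL.mem_iff.1 (by simp)
    have hyA : y ∈ A := hL.mem_iff.1 (by simp)
    rcases Sym2.eq_iff.1 hpair with ⟨rfl, rfl⟩ | ⟨rfl, rfl⟩
    · simp only [and_self, true_or, iff_true]
      exact ⟨⟨hxA, hyA⟩, hxy₁, hT⟩
    · simp only [hxy.symm, false_and, false_or]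
      omega
  · have hne : ¬(u = x ∧ v = y) := fun h => hpair (by rw [h.1, h.2])
    rw [or_iff_right hne]
    refine and_congr_right fun ⟨hu, hv⟩ => ?_
    rw [List.idxOf_lt_idxOf_swap_iff hL.1 (hL.mem_iff.2 hu) (hL.mem_iff.2 hv) hpair]

theorem kendallDist_le_of_alike {R R' T : List α} (hR : IsLinOrd A R) (hT : IsLinOrd A T)
    (h : Alike R R') : kendallDist A R T ≤ kendallDist A R' T + 1 := by
  obtain ⟨l₁, l₂, x, y, hxy, rfl, rfl⟩ := h
  rcases (hT.idxOf_ne (hR.mem_iff.1 (by simp)) hxy).lt_or_gt with hlt | hgt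
  · have := kendallDist_swap (hR.of_alike ⟨l₁, l₂, x, y, hxy, rfl, rfl⟩) hlt
    omega
  · have := kendallDist_swap hR hgt
    omega

theorem exists_adjacent_inversion {R T : List α} (hR : IsLinOrd A R) (hT : IsLinOrd A T)
    (hne : R ≠ T) : ∃ l₁ l₂ x y, R = l₁ ++ x :: y :: l₂ ∧ T.idxOf y < T.idxOf x := by
  by_contra! h
  have hchain : R.IsChain (fun a b => T.idxOf a < T.idxOf b) :=
    List.isChain_iff_forall_rel_of_append_cons_cons.2 fun x y l₁ l₂ hR' => by
      have hxy : x ≠ y := by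
        rintro rfl
        simpa [hR', List.nodup_append] using hR.1
      exact (h l₁ l₂ x y hR').lt_of_ne (hT.idxOf_ne (hR.mem_iff.1 (by simp [hR'])) hxy)
  have hsorted := @List.isChain_iff_pairwise _ _ _ ⟨fun h₁ h₂ => h₁.trans h₂⟩ |>.1 hchain
  have hperm := List.perm_of_nodup_nodup_toFinset_eq hR.1 hT.1 (hR.2.trans hT.2.symm)
  exact hne <| hperm.eq_of_pairwise (fun _ _ _ _ hab hba => absurd (hab.trans hba) (lt_irrefl _))
    hsorted hT.1.pairwise_idxOf_lt

theorem IsPath.isLinOrd_left {P : List (List α)} {R T : List α} (h : IsPath A P R T) :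
    IsLinOrd A R :=
  h.1.2.1 R (List.mem_of_mem_head? h.2.1)

theorem IsPath.isLinOrd_right {P : List (List α)} {R T : List α} (h : IsPath A P R T) :
    IsLinOrd A T :=
  h.1.2.1 T (List.mem_of_mem_getLast? h.2.2)

theorem isPath_singleton_iff {a R T : List α} :
    IsPath A [a] R T ↔ IsLinOrd A a ∧ a = R ∧ a = T := by
  rw [IsPath, IsPathOn, List.forall_mem_singleton, List.head?_cons, List.getLast?_singleton,
    Option.some_inj, Option.some_inj]
  exact ⟨fun ⟨⟨_, ha, _⟩, hR, hT⟩ => ⟨ha, hR, hT⟩,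
    fun ⟨ha, hR, hT⟩ => ⟨⟨List.cons_ne_nil _ _, ha, List.isChain_singleton a⟩, hR, hT⟩⟩

theorem isPath_cons_cons_iff {a b R T : List α} {l : List (List α)} :
    IsPath A (a :: b :: l) R T ↔ a = R ∧ IsLinOrd A a ∧ Alike a b ∧ IsPath A (b :: l) b T := by
  rw [IsPath, IsPath, IsPathOn, IsPathOn, List.forall_mem_cons, List.getLast?_cons_cons,
    List.head?_cons, List.head?_cons, Option.some_inj, Option.some_inj]
  constructor
  · rintro ⟨⟨-, ⟨ha, hmem⟩, hch⟩, rfl, hT⟩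
    exact ⟨rfl, ha, (List.isChain_cons_cons.1 hch).1,
      ⟨List.cons_ne_nil _ _, hmem, (List.isChain_cons_cons.1 hch).2⟩, rfl, hT⟩
  · rintro ⟨rfl, ha, hab, ⟨-, hmem, hch⟩, -, hT⟩
    exact ⟨⟨List.cons_ne_nil _ _, ⟨ha, hmem⟩, List.isChain_cons_cons.2 ⟨hab, hch⟩⟩, rfl, hT⟩

theorem IsPath.cons {P : List (List α)} {R R' T : List α} (hP : IsPath A P R' T)
    (hR : IsLinOrd A R) (h : Alike R R') : IsPath A (R :: P) R T := by
  cases P with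
  | nil => exact absurd rfl hP.1.1
  | cons b l =>
    obtain rfl : b = R' := by simpa using hP.2.1
    exact isPath_cons_cons_iff.2 ⟨rfl, hR, h, hP⟩

theorem IsPath.append {P Q : List (List α)} {R S T : List α} (hP : IsPath A P R S)
    (hQ : IsPath A Q S T) : IsPath A (P ++ Q.tail) R T := by
  induction P generalizing R with
  | nil => exact absurd rfl hP.1.1
  | cons a l ih =>
    cases l with
    | nil =>
      obtain ⟨-, rfl, rfl⟩ := isPath_singleton_iff.1 hP
      rwa [List.singleton_append, List.cons_head?_tail hQ.2.1]
    | cons b l =>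
      obtain ⟨rfl, ha, hab, hP'⟩ := isPath_cons_cons_iff.1 hP
      exact (ih hP').cons ha hab

theorem switchPair?_swap {l₁ l₂ : List α} {x y : α} (hxy : x ≠ y) :
    switchPair? (l₁ ++ x :: y :: l₂) (l₁ ++ y :: x :: l₂) = some s(x, y) := by
  induction l₁ <;> simp_all [switchPair?]

theorem switchSeq_cons_cons (a b : List α) (l : List (List α)) :
    switchSeq (a :: b :: l) = (switchPair? a b).toList ++ switchSeq (b :: l) := by
  cases h : switchPair? a b <;> simp [switchSeq, h]

theorem IsPath.mk_mem_switchSeq {P : List (List α)} {R T : List α} (h : IsPath A P R T)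
    {u v : α} (huv : (u, v) ∈ discordantPairs A R T) : s(u, v) ∈ switchSeq P := by
  induction P generalizing R with
  | nil => exact absurd rfl h.1.1
  | cons a l ih =>
    cases l with
    | nil =>
      obtain ⟨-, rfl, rfl⟩ := isPath_singleton_iff.1 h
      rw [mem_discordantPairs] at huv
      omega
    | cons b l =>
      obtain ⟨rfl, ha, ⟨l₁, l₂, x, y, hxy, rfl, rfl⟩, h'⟩ := isPath_cons_cons_iff.1 h
      rw [switchSeq_cons_cons, switchPair?_swap hxy, Option.toList_some, List.singleton_append,
        List.mem_cons]
      by_cases hpair : s(u, v) = s(x, y)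
      · exact .inl hpair
      refine .inr (ih h' ?_)
      rw [mem_discordantPairs] at huv ⊢
      rwa [List.idxOf_lt_idxOf_swap_iff ha.1 (ha.mem_iff.2 huv.1.1) (ha.mem_iff.2 huv.1.2) hpair]

theorem IsPath.kendallDist_lt_length {P : List (List α)} {R T : List α} (h : IsPath A P R T) :
    kendallDist A R T < P.length := by
  induction P generalizing R with
  | nil => exact absurd rfl h.1.1
  | cons a l ih =>
    cases l with
    | nil =>
      obtain ⟨-, rfl, rfl⟩ := isPath_singleton_iff.1 h
      simp [kendallDist_self]
    | cons b l =>
      obtain ⟨rfl, ha, hab, h'⟩ := isPath_cons_cons_iff.1 h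
      have := kendallDist_le_of_alike ha h'.isLinOrd_right hab
      have := ih h'
      simp only [List.length_cons] at *
      omega

/-- Bubble sort: repeatedly swap an adjacent pair that `T` ranks the other way round. -/
theorem exists_isPath_length_eq {R T : List α} (hR : IsLinOrd A R) (hT : IsLinOrd A T) :
    ∃ P, IsPath A P R T ∧ P.length = kendallDist A R T + 1 := by
  induction hn : kendallDist A R T generalizing R with
  | zero =>
    obtain rfl : R = T := by
      by_contra hne
      obtain ⟨l₁, l₂, x, y, rfl, hyx⟩ := exists_adjacent_inversion hR hT hne
      have := kendallDist_swap hR hyx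
      omega
    exact ⟨[R], isPath_singleton_iff.2 ⟨hR, rfl, rfl⟩, rfl⟩
  | succ n ih =>
    have hne : R ≠ T := by
      rintro rfl
      rw [kendallDist_self] at hn
      omega
    obtain ⟨l₁, l₂, x, y, rfl, hyx⟩ := exists_adjacent_inversion hR hT hne
    have hxy : x ≠ y := by rintro rfl; omega
    have hswap : Alike (l₁ ++ x :: y :: l₂) (l₁ ++ y :: x :: l₂) := ⟨l₁, l₂, x, y, hxy, rfl, rfl⟩
    obtain ⟨P, hP, hlen⟩ := ih (hR.of_alike hswap) (by have := kendallDist_swap hR hyx; omega)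
    exact ⟨_, hP.cons hR hswap, by rw [List.length_cons, hlen]⟩

theorem IsGeodesic.length_eq {P : List (List α)} {R T : List α} (h : IsGeodesic A P R T) :
    P.length = kendallDist A R T + 1 := by
  obtain ⟨Q, hQ, hlen⟩ := exists_isPath_length_eq h.1.isLinOrd_left h.1.isLinOrd_right
  have := h.2 Q hQ
  have := h.1.kendallDist_lt_length
  omega

theorem kendallDist_add_le_of_disjoint_switchSeq {P Q : List (List α)} {R S T : List α}
    (hP : IsPath A P R S) (hQ : IsPath A Q S T)
    (hdisj : ∀ p : Sym2 α, p ∈ switchSeq P → p ∉ switchSeq Q) :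
    kendallDist A R S + kendallDist A S T ≤ kendallDist A R T := by
  have hRS : discordantPairs A R S ⊆ discordantPairs A R T := by
    rintro ⟨u, v⟩ huv
    refine (mem_discordantPairs_or hQ.isLinOrd_right huv).resolve_right fun hTS => ?_
    have hvu := hQ.mk_mem_switchSeq (mem_discordantPairs_comm.1 hTS)
    exact hdisj _ (hP.mk_mem_switchSeq huv) (Sym2.eq_swap ▸ hvu)
  have hST : discordantPairs A S T ⊆ discordantPairs A R T := by
    rintro ⟨u, v⟩ huv
    refine (mem_discordantPairs_or hP.isLinOrd_left huv).resolve_left fun hSR => ?_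
    have hvu := hP.mk_mem_switchSeq (mem_discordantPairs_comm.1 hSR)
    exact hdisj _ (Sym2.eq_swap ▸ hvu) (hQ.mk_mem_switchSeq huv)
  calc kendallDist A R S + kendallDist A S T
      = (discordantPairs A R S ∪ discordantPairs A S T).card :=
        (Finset.card_union_of_disjoint (disjoint_discordantPairs R S T)).symm
    _ ≤ kendallDist A R T := Finset.card_le_card (Finset.union_subset hRS hST)

end KendallDistance

/-- If `𝒜` and `ℬ` are geodesics such that the last member of
`𝒜` is the first member of `ℬ` and their switching pairs are pairwise
distinct, then the concatenation is a geodesic connecting the first member of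
`𝒜` and the last member of `ℬ`. -/
theorem geodesic_append [DecidableEq α] (A : Finset α)
    (P Q : List (List α)) (R S T : List α)
    (hP : IsGeodesic A P R S) (hQ : IsGeodesic A Q S T)
    (hdisj : ∀ p : Sym2 α, p ∈ switchSeq P → p ∉ switchSeq Q) :
    IsGeodesic A (P ++ Q.tail) R T := by
  refine ⟨hP.1.append hQ.1, fun Q' hQ' => ?_⟩
  have hadd := kendallDist_add_le_of_disjoint_switchSeq hP.1 hQ.1 hdisj
  have hlb := hQ'.kendallDist_lt_length
  rw [List.length_append, List.length_tail, hP.length_eq, hQ.length_eq]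
  omega
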